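/- The function Ê(q,p,d) = pᵗA(q)p + k(q) + dλ·det(A(q)) is a Casimir function of the Poisson operator Π_A, i.e., Π_A ∇_M Ê = 0, where ∇_M is the gradient in the five variables (q₁,q₂,p₁,p₂,d). -/

import Mathlib

open Matrix
open scoped BigOperators

/-- Partial derivative with respect to the first variable. -/
noncomputable def pr (f : ℝ → ℝ → ℝ) (r w : ℝ) : ℝ := deriv (fun x => f x w) r

/-- Partial derivative with respect to the second variable. -/
noncomputable def pw (f : ℝ → ℝ → ℝ) (r w : ℝ) : ℝ := deriv (fun y => f r y) w

/-- Partial derivative on the extended phase space `ℝ⁵` (`q₁,q₂,p₁,p₂,d`). -/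
noncomputable def pd5 (i : Fin 5) (f : (Fin 5 → ℝ) → ℝ) (x : Fin 5 → ℝ) : ℝ :=
  fderiv ℝ f x (Pi.single i 1)

/-- The `5×5` antisymmetric matrix `Π_A` of the qLN theory, determined by the cyclic
matrix `A` (with parameters `a,b,c,al,be,ga`), the quasi-potential `k` and `λ = lam`. -/
noncomputable def PiA (a b c al be ga lam : ℝ) (k : ℝ → ℝ → ℝ) (x : Fin 5 → ℝ) :
    Matrix (Fin 5) (Fin 5) ℝ :=
  let q1 := x 0; let q2 := x 1; let p1 := x 2; let p2 := x 3; let d := x 4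
  let A11 : ℝ → ℝ → ℝ := fun _ w => a * w ^ 2 + b * w + al
  let A12 : ℝ → ℝ → ℝ := fun r w => (-2 * a * r * w - b * r - c * w + be) / 2
  let A22 : ℝ → ℝ → ℝ := fun r _ => a * r ^ 2 + c * r + ga
  let D : ℝ → ℝ → ℝ := fun r w => A11 r w * A22 r w - A12 r w ^ 2
  let inv1 : ℝ → ℝ → ℝ := fun fr fw => (A22 q1 q2 * fr - A12 q1 q2 * fw) / D q1 q2
  let inv2 : ℝ → ℝ → ℝ := fun fr fw => (-(A12 q1 q2) * fr + A11 q1 q2 * fw) / D q1 q2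
  let M1 := -(1/2) * inv1 (pr k q1 q2) (pw k q1 q2)
  let M2 := -(1/2) * inv2 (pr k q1 q2) (pw k q1 q2)
  let Mh1 := M1 - (lam * d / 2) * inv1 (pr D q1 q2) (pw D q1 q2)
  let Mh2 := M2 - (lam * d / 2) * inv2 (pr D q1 q2) (pw D q1 q2)
  let G11 := A22 q1 q2; let G12 := -(A12 q1 q2); let G22 := A11 q1 q2
  let F12 := (1/2) * (pr A22 q1 q2 * p2 - pw A11 q1 q2 * p1)
  !![0, 0, -(lam/2) * G11, -(lam/2) * G12, p1;
     0, 0, -(lam/2) * G12, -(lam/2) * G22, p2;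
     (lam/2) * G11, (lam/2) * G12, 0, -(lam/2) * F12, Mh1;
     (lam/2) * G12, (lam/2) * G22, (lam/2) * F12, 0, Mh2;
     -p1, -p2, -Mh1, -Mh2, 0]


private lemma pd5_eq_deriv' (f : (Fin 5 → ℝ) → ℝ) (x : Fin 5 → ℝ) (i : Fin 5)
    (hf : DifferentiableAt ℝ f x) :
    fderiv ℝ f x (Pi.single i 1) = deriv (fun t => f (Function.update x i t)) (x i) := by
  have hu : (fun t : ℝ => Function.update x i t)
      = fun t => x + (t - x i) • (Pi.single i 1 : Fin 5 → ℝ) := by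
    funext t; funext j
    by_cases h : j = i
    · subst h; simp
    · simp [Function.update_of_ne h, Pi.single_apply, h]
  have hud : HasDerivAt (fun t => Function.update x i t)
      (Pi.single i 1 : Fin 5 → ℝ) (x i) := by
    rw [hu]
    have h1 : HasDerivAt (fun t : ℝ => t - x i) 1 (x i) := (hasDerivAt_id _).sub_const _
    have := h1.smul_const (Pi.single i 1 : Fin 5 → ℝ)
    simpa using this.const_add x
  have hx : Function.update x i (x i) = x := Function.update_eq_self i x
  have h2 : HasFDerivAt f (fderiv ℝ f x) (Function.update x i (x i)) := by
    rw [hx]; exact hf.hasFDerivAt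
  have h3 := h2.comp_hasDerivAt (x i) hud
  exact (h3.deriv).symm

private lemma quadDeriv (U V t : ℝ) : HasDerivAt (fun s => U*s^2 + V*s) (2*U*t+V) t := by
  have := ((hasDerivAt_pow 2 t).const_mul U).add ((hasDerivAt_id t).const_mul V)
  exact this.congr_deriv (by push_cast; ring)

set_option maxHeartbeats 4000000 in
/-- the function `Ê(q,p,d) = pᵗA(q)p + k(q) + dλ·det A(q)` is a Casimir
function of the Poisson operator `Π_A`, i.e. `Π_A ∇_M Ê = 0`. -/
theorem stmt_14 (a b c al be ga lam : ℝ) (k : ℝ → ℝ → ℝ)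
    (hk : ContDiff ℝ (⊤ : ℕ∞) fun p : ℝ × ℝ => k p.1 p.2)
    (hdet : ∀ r w, (a * w ^ 2 + b * w + al) * (a * r ^ 2 + c * r + ga)
        - ((-2 * a * r * w - b * r - c * w + be) / 2) ^ 2 ≠ 0)
    (Ehat : (Fin 5 → ℝ) → ℝ)
    (hE : Ehat = fun x =>
      (a * (x 1) ^ 2 + b * (x 1) + al) * (x 2) ^ 2
      + 2 * ((-2 * a * (x 0) * (x 1) - b * (x 0) - c * (x 1) + be) / 2) * (x 2) * (x 3)
      + (a * (x 0) ^ 2 + c * (x 0) + ga) * (x 3) ^ 2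
      + k (x 0) (x 1)
      + (x 4) * lam *
        ((a * (x 1) ^ 2 + b * (x 1) + al) * (a * (x 0) ^ 2 + c * (x 0) + ga)
          - ((-2 * a * (x 0) * (x 1) - b * (x 0) - c * (x 1) + be) / 2) ^ 2)) :
    ∀ x, PiA a b c al be ga lam k x *ᵥ (fun i => pd5 i Ehat x) = 0 := by
  intro x
  have hK : Differentiable ℝ (fun p : ℝ × ℝ => k p.1 p.2) := hk.differentiable (by simp)
  have hkd : DifferentiableAt ℝ (fun x : Fin 5 → ℝ => k (x 0) (x 1)) x := by
    have h1 : DifferentiableAt ℝ (fun p : ℝ × ℝ => k p.1 p.2) (x 0, x 1) := hK.differentiableAt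
    have h2 : DifferentiableAt ℝ (fun x : Fin 5 → ℝ => ((x 0, x 1) : ℝ × ℝ)) x := by fun_prop
    exact h1.comp (𝕜 := ℝ) x h2
  have hEdiff : DifferentiableAt ℝ Ehat x := by
    rw [hE]
    exact (DifferentiableAt.add (by fun_prop) hkd).add (by fun_prop)
  have hks1 : HasDerivAt (fun t => k t (x 1)) (pr k (x 0) (x 1)) (x 0) := by
    have h1 : DifferentiableAt ℝ (fun p : ℝ × ℝ => k p.1 p.2) (x 0, x 1) := hK.differentiableAt
    have h2 : DifferentiableAt ℝ (fun t : ℝ => ((t, x 1) : ℝ × ℝ)) (x 0) := by fun_prop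
    exact (h1.comp (𝕜 := ℝ) (x 0) h2).hasDerivAt
  have hks2 : HasDerivAt (fun t => k (x 0) t) (pw k (x 0) (x 1)) (x 1) := by
    have h1 : DifferentiableAt ℝ (fun p : ℝ × ℝ => k p.1 p.2) (x 0, x 1) := hK.differentiableAt
    have h2 : DifferentiableAt ℝ (fun t : ℝ => ((x 0, t) : ℝ × ℝ)) (x 1) := by fun_prop
    exact (h1.comp (𝕜 := ℝ) (x 1) h2).hasDerivAt
  have h0 : pd5 0 Ehat x = 2*(a*(x 3)^2 + (x 4)*lam*((a*(x 1)^2 + b*(x 1) + al)*a - (2*a*(x 1) + b)^2/4))*(x 0) + (-(2*a*(x 1) + b)*(x 2)*(x 3) + c*(x 3)^2 + (x 4)*lam*((a*(x 1)^2 + b*(x 1) + al)*c + (2*a*(x 1) + b)*(be - c*(x 1))/2)) + pr k (x 0) (x 1) := by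
    rw [show pd5 0 Ehat x = fderiv ℝ Ehat x (Pi.single 0 1) from rfl,
      pd5_eq_deriv' _ _ _ hEdiff]
    have hrepr : (fun t => Ehat (Function.update x 0 t))
        = (fun t : ℝ => ((a*(x 3)^2 + (x 4)*lam*((a*(x 1)^2 + b*(x 1) + al)*a - (2*a*(x 1) + b)^2/4))*t^2 + (-(2*a*(x 1) + b)*(x 2)*(x 3) + c*(x 3)^2 + (x 4)*lam*((a*(x 1)^2 + b*(x 1) + al)*c + (2*a*(x 1) + b)*(be - c*(x 1))/2))*t) + (k t (x 1) + ((a*(x 1)^2 + b*(x 1) + al)*(x 2)^2 + (be - c*(x 1))*(x 2)*(x 3) + ga*(x 3)^2 + (x 4)*lam*((a*(x 1)^2 + b*(x 1) + al)*ga - (be - c*(x 1))^2/4)))) := by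
      funext t; rw [hE]; simp [Function.update_apply]; ring
    rw [hrepr]
    exact ((quadDeriv (a*(x 3)^2 + (x 4)*lam*((a*(x 1)^2 + b*(x 1) + al)*a - (2*a*(x 1) + b)^2/4)) (-(2*a*(x 1) + b)*(x 2)*(x 3) + c*(x 3)^2 + (x 4)*lam*((a*(x 1)^2 + b*(x 1) + al)*c + (2*a*(x 1) + b)*(be - c*(x 1))/2)) (x 0)).add (hks1.add_const ((a*(x 1)^2 + b*(x 1) + al)*(x 2)^2 + (be - c*(x 1))*(x 2)*(x 3) + ga*(x 3)^2 + (x 4)*lam*((a*(x 1)^2 + b*(x 1) + al)*ga - (be - c*(x 1))^2/4)))).deriv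
  have h1 : pd5 1 Ehat x = 2*(a*(x 2)^2 + (x 4)*lam*(a*(a*(x 0)^2 + c*(x 0) + ga) - (2*a*(x 0) + c)^2/4))*(x 1) + (b*(x 2)^2 - (2*a*(x 0) + c)*(x 2)*(x 3) + (x 4)*lam*(b*(a*(x 0)^2 + c*(x 0) + ga) + (2*a*(x 0) + c)*(be - b*(x 0))/2)) + pw k (x 0) (x 1) := by
    rw [show pd5 1 Ehat x = fderiv ℝ Ehat x (Pi.single 1 1) from rfl,
      pd5_eq_deriv' _ _ _ hEdiff]
    have hrepr : (fun t => Ehat (Function.update x 1 t))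
        = (fun t : ℝ => ((a*(x 2)^2 + (x 4)*lam*(a*(a*(x 0)^2 + c*(x 0) + ga) - (2*a*(x 0) + c)^2/4))*t^2 + (b*(x 2)^2 - (2*a*(x 0) + c)*(x 2)*(x 3) + (x 4)*lam*(b*(a*(x 0)^2 + c*(x 0) + ga) + (2*a*(x 0) + c)*(be - b*(x 0))/2))*t) + (k (x 0) t + (al*(x 2)^2 + (be - b*(x 0))*(x 2)*(x 3) + (a*(x 0)^2 + c*(x 0) + ga)*(x 3)^2 + (x 4)*lam*(al*(a*(x 0)^2 + c*(x 0) + ga) - (be - b*(x 0))^2/4)))) := by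
      funext t; rw [hE]; simp [Function.update_apply]; ring
    rw [hrepr]
    exact ((quadDeriv (a*(x 2)^2 + (x 4)*lam*(a*(a*(x 0)^2 + c*(x 0) + ga) - (2*a*(x 0) + c)^2/4)) (b*(x 2)^2 - (2*a*(x 0) + c)*(x 2)*(x 3) + (x 4)*lam*(b*(a*(x 0)^2 + c*(x 0) + ga) + (2*a*(x 0) + c)*(be - b*(x 0))/2)) (x 1)).add (hks2.add_const (al*(x 2)^2 + (be - b*(x 0))*(x 2)*(x 3) + (a*(x 0)^2 + c*(x 0) + ga)*(x 3)^2 + (x 4)*lam*(al*(a*(x 0)^2 + c*(x 0) + ga) - (be - b*(x 0))^2/4)))).deriv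
  have h2 : pd5 2 Ehat x = 2*(a*(x 1)^2 + b*(x 1) + al)*(x 2) + (2*((-2*a*(x 0)*(x 1) - b*(x 0) - c*(x 1) + be)/2)*(x 3)) := by
    rw [show pd5 2 Ehat x = fderiv ℝ Ehat x (Pi.single 2 1) from rfl,
      pd5_eq_deriv' _ _ _ hEdiff]
    have hrepr : (fun t => Ehat (Function.update x 2 t))
        = (fun t : ℝ => ((a*(x 1)^2 + b*(x 1) + al)*t^2 + (2*((-2*a*(x 0)*(x 1) - b*(x 0) - c*(x 1) + be)/2)*(x 3))*t) + ((a*(x 0)^2 + c*(x 0) + ga)*(x 3)^2 + k (x 0) (x 1) + (x 4)*lam*((a*(x 1)^2 + b*(x 1) + al)*(a*(x 0)^2 + c*(x 0) + ga) - ((-2*a*(x 0)*(x 1) - b*(x 0) - c*(x 1) + be)/2)^2))) := by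
      funext t; rw [hE]; simp [Function.update_apply]; ring
    rw [hrepr]
    exact ((quadDeriv (a*(x 1)^2 + b*(x 1) + al) (2*((-2*a*(x 0)*(x 1) - b*(x 0) - c*(x 1) + be)/2)*(x 3)) (x 2)).add_const ((a*(x 0)^2 + c*(x 0) + ga)*(x 3)^2 + k (x 0) (x 1) + (x 4)*lam*((a*(x 1)^2 + b*(x 1) + al)*(a*(x 0)^2 + c*(x 0) + ga) - ((-2*a*(x 0)*(x 1) - b*(x 0) - c*(x 1) + be)/2)^2))).deriv
  have h3 : pd5 3 Ehat x = 2*(a*(x 0)^2 + c*(x 0) + ga)*(x 3) + (2*((-2*a*(x 0)*(x 1) - b*(x 0) - c*(x 1) + be)/2)*(x 2)) := by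
    rw [show pd5 3 Ehat x = fderiv ℝ Ehat x (Pi.single 3 1) from rfl,
      pd5_eq_deriv' _ _ _ hEdiff]
    have hrepr : (fun t => Ehat (Function.update x 3 t))
        = (fun t : ℝ => ((a*(x 0)^2 + c*(x 0) + ga)*t^2 + (2*((-2*a*(x 0)*(x 1) - b*(x 0) - c*(x 1) + be)/2)*(x 2))*t) + ((a*(x 1)^2 + b*(x 1) + al)*(x 2)^2 + k (x 0) (x 1) + (x 4)*lam*((a*(x 1)^2 + b*(x 1) + al)*(a*(x 0)^2 + c*(x 0) + ga) - ((-2*a*(x 0)*(x 1) - b*(x 0) - c*(x 1) + be)/2)^2))) := by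
      funext t; rw [hE]; simp [Function.update_apply]; ring
    rw [hrepr]
    exact ((quadDeriv (a*(x 0)^2 + c*(x 0) + ga) (2*((-2*a*(x 0)*(x 1) - b*(x 0) - c*(x 1) + be)/2)*(x 2)) (x 3)).add_const ((a*(x 1)^2 + b*(x 1) + al)*(x 2)^2 + k (x 0) (x 1) + (x 4)*lam*((a*(x 1)^2 + b*(x 1) + al)*(a*(x 0)^2 + c*(x 0) + ga) - ((-2*a*(x 0)*(x 1) - b*(x 0) - c*(x 1) + be)/2)^2))).deriv
  have h4 : pd5 4 Ehat x = 2*0*(x 4) + (lam*((a*(x 1)^2 + b*(x 1) + al)*(a*(x 0)^2 + c*(x 0) + ga) - ((-2*a*(x 0)*(x 1) - b*(x 0) - c*(x 1) + be)/2)^2)) := by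
    rw [show pd5 4 Ehat x = fderiv ℝ Ehat x (Pi.single 4 1) from rfl,
      pd5_eq_deriv' _ _ _ hEdiff]
    have hrepr : (fun t => Ehat (Function.update x 4 t))
        = (fun t : ℝ => (0*t^2 + (lam*((a*(x 1)^2 + b*(x 1) + al)*(a*(x 0)^2 + c*(x 0) + ga) - ((-2*a*(x 0)*(x 1) - b*(x 0) - c*(x 1) + be)/2)^2))*t) + ((a*(x 1)^2 + b*(x 1) + al)*(x 2)^2 + 2*((-2*a*(x 0)*(x 1) - b*(x 0) - c*(x 1) + be)/2)*(x 2)*(x 3) + (a*(x 0)^2 + c*(x 0) + ga)*(x 3)^2 + k (x 0) (x 1))) := by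
      funext t; rw [hE]; simp [Function.update_apply]; ring
    rw [hrepr]
    exact ((quadDeriv 0 (lam*((a*(x 1)^2 + b*(x 1) + al)*(a*(x 0)^2 + c*(x 0) + ga) - ((-2*a*(x 0)*(x 1) - b*(x 0) - c*(x 1) + be)/2)^2)) (x 4)).add_const ((a*(x 1)^2 + b*(x 1) + al)*(x 2)^2 + 2*((-2*a*(x 0)*(x 1) - b*(x 0) - c*(x 1) + be)/2)*(x 2)*(x 3) + (a*(x 0)^2 + c*(x 0) + ga)*(x 3)^2 + k (x 0) (x 1))).deriv
  have hprA22 : pr (fun r _ => a * r ^ 2 + c * r + ga) (x 0) (x 1) = 2*a*(x 0) + c := by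
    show deriv (fun r : ℝ => a * r ^ 2 + c * r + ga) (x 0) = _
    have hr : (fun r : ℝ => a * r ^ 2 + c * r + ga) = (fun s : ℝ => (a*s^2 + c*s) + ga) := by
      funext s; ring
    rw [hr]
    exact ((quadDeriv a c (x 0)).add_const ga).deriv
  have hpwA11 : pw (fun _ w => a * w ^ 2 + b * w + al) (x 0) (x 1) = 2*a*(x 1) + b := by
    show deriv (fun w : ℝ => a * w ^ 2 + b * w + al) (x 1) = _
    have hr : (fun w : ℝ => a * w ^ 2 + b * w + al) = (fun s : ℝ => (a*s^2 + b*s) + al) := by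
      funext s; ring
    rw [hr]
    exact ((quadDeriv a b (x 1)).add_const al).deriv
  have hprD : pr (fun r w => (a * w ^ 2 + b * w + al) * (a * r ^ 2 + c * r + ga)
      - ((-2 * a * r * w - b * r - c * w + be) / 2) ^ 2) (x 0) (x 1)
      = 2*((a*(x 1)^2 + b*(x 1) + al)*a - (2*a*(x 1) + b)^2/4)*(x 0) + ((a*(x 1)^2 + b*(x 1) + al)*c + (2*a*(x 1) + b)*(be - c*(x 1))/2) := by
    show deriv (fun r : ℝ => (a * (x 1) ^ 2 + b * (x 1) + al) * (a * r ^ 2 + c * r + ga)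
      - ((-2 * a * r * (x 1) - b * r - c * (x 1) + be) / 2) ^ 2) (x 0) = _
    have hr : (fun r : ℝ => (a * (x 1) ^ 2 + b * (x 1) + al) * (a * r ^ 2 + c * r + ga)
        - ((-2 * a * r * (x 1) - b * r - c * (x 1) + be) / 2) ^ 2)
        = (fun s : ℝ => (((a*(x 1)^2 + b*(x 1) + al)*a - (2*a*(x 1) + b)^2/4)*s^2 + ((a*(x 1)^2 + b*(x 1) + al)*c + (2*a*(x 1) + b)*(be - c*(x 1))/2)*s) + ((a*(x 1)^2 + b*(x 1) + al)*ga - (be - c*(x 1))^2/4)) := by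
      funext s; ring
    rw [hr]
    exact ((quadDeriv ((a*(x 1)^2 + b*(x 1) + al)*a - (2*a*(x 1) + b)^2/4) ((a*(x 1)^2 + b*(x 1) + al)*c + (2*a*(x 1) + b)*(be - c*(x 1))/2) (x 0)).add_const ((a*(x 1)^2 + b*(x 1) + al)*ga - (be - c*(x 1))^2/4)).deriv
  have hpwD : pw (fun r w => (a * w ^ 2 + b * w + al) * (a * r ^ 2 + c * r + ga)
      - ((-2 * a * r * w - b * r - c * w + be) / 2) ^ 2) (x 0) (x 1)
      = 2*(a*(a*(x 0)^2 + c*(x 0) + ga) - (2*a*(x 0) + c)^2/4)*(x 1) + (b*(a*(x 0)^2 + c*(x 0) + ga) + (2*a*(x 0) + c)*(be - b*(x 0))/2) := by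
    show deriv (fun w : ℝ => (a * w ^ 2 + b * w + al) * (a * (x 0) ^ 2 + c * (x 0) + ga)
      - ((-2 * a * (x 0) * w - b * (x 0) - c * w + be) / 2) ^ 2) (x 1) = _
    have hr : (fun w : ℝ => (a * w ^ 2 + b * w + al) * (a * (x 0) ^ 2 + c * (x 0) + ga)
        - ((-2 * a * (x 0) * w - b * (x 0) - c * w + be) / 2) ^ 2)
        = (fun s : ℝ => ((a*(a*(x 0)^2 + c*(x 0) + ga) - (2*a*(x 0) + c)^2/4)*s^2 + (b*(a*(x 0)^2 + c*(x 0) + ga) + (2*a*(x 0) + c)*(be - b*(x 0))/2)*s) + (al*(a*(x 0)^2 + c*(x 0) + ga) - (be - b*(x 0))^2/4)) := by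
      funext s; ring
    rw [hr]
    exact ((quadDeriv (a*(a*(x 0)^2 + c*(x 0) + ga) - (2*a*(x 0) + c)^2/4) (b*(a*(x 0)^2 + c*(x 0) + ga) + (2*a*(x 0) + c)*(be - b*(x 0))/2) (x 1)).add_const (al*(a*(x 0)^2 + c*(x 0) + ga) - (be - b*(x 0))^2/4)).deriv
  funext j
  fin_cases j
  · simp only [Matrix.mulVec, dotProduct, Fin.sum_univ_five, PiA,
      Matrix.cons_val', Matrix.cons_val_zero, Matrix.cons_val_one, Matrix.head_cons,
      Matrix.empty_val', Matrix.cons_val_fin_one, Matrix.head_fin_const,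
      Matrix.cons_val_two, Matrix.tail_cons, Matrix.cons_val_three, Matrix.cons_val_four,
      Matrix.of_apply, Fin.zero_eta, Fin.mk_one, Fin.reduceFinMk, hprA22, hpwA11, hprD, hpwD, h0, h1, h2, h3, h4, Pi.zero_apply]
    have hD0 := hdet (x 0) (x 1)
    generalize hDv : (a * x 1 ^ 2 + b * x 1 + al) * (a * x 0 ^ 2 + c * x 0 + ga) -
      ((-2 * a * x 0 * x 1 - b * x 0 - c * x 1 + be) / 2) ^ 2 = Dv at hD0 ⊢
    have hinv : Dv * Dv⁻¹ = 1 := mul_inv_cancel₀ hD0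
    linear_combination (-(lam * (x 2))) * hDv
  · simp only [Matrix.mulVec, dotProduct, Fin.sum_univ_five, PiA,
      Matrix.cons_val', Matrix.cons_val_zero, Matrix.cons_val_one, Matrix.head_cons,
      Matrix.empty_val', Matrix.cons_val_fin_one, Matrix.head_fin_const,
      Matrix.cons_val_two, Matrix.tail_cons, Matrix.cons_val_three, Matrix.cons_val_four,
      Matrix.of_apply, Fin.zero_eta, Fin.mk_one, Fin.reduceFinMk, hprA22, hpwA11, hprD, hpwD, h0, h1, h2, h3, h4, Pi.zero_apply]
    have hD0 := hdet (x 0) (x 1)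
    generalize hDv : (a * x 1 ^ 2 + b * x 1 + al) * (a * x 0 ^ 2 + c * x 0 + ga) -
      ((-2 * a * x 0 * x 1 - b * x 0 - c * x 1 + be) / 2) ^ 2 = Dv at hD0 ⊢
    have hinv : Dv * Dv⁻¹ = 1 := mul_inv_cancel₀ hD0
    linear_combination (-(lam * (x 3))) * hDv
  · simp only [Matrix.mulVec, dotProduct, Fin.sum_univ_five, PiA,
      Matrix.cons_val', Matrix.cons_val_zero, Matrix.cons_val_one, Matrix.head_cons,
      Matrix.empty_val', Matrix.cons_val_fin_one, Matrix.head_fin_const,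
      Matrix.cons_val_two, Matrix.tail_cons, Matrix.cons_val_three, Matrix.cons_val_four,
      Matrix.of_apply, Fin.zero_eta, Fin.mk_one, Fin.reduceFinMk, hprA22, hpwA11, hprD, hpwD, h0, h1, h2, h3, h4, Pi.zero_apply]
    have hD0 := hdet (x 0) (x 1)
    generalize hDv : (a * x 1 ^ 2 + b * x 1 + al) * (a * x 0 ^ 2 + c * x 0 + ga) -
      ((-2 * a * x 0 * x 1 - b * x 0 - c * x 1 + be) / 2) ^ 2 = Dv at hD0 ⊢
    have hinv : Dv * Dv⁻¹ = 1 := mul_inv_cancel₀ hD0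
    linear_combination (lam * (-(1/2) * ((a * (x 0) ^ 2 + c * (x 0) + ga) * pr k (x 0) (x 1) - ((-2 * a * (x 0) * (x 1) - b * (x 0) - c * (x 1) + be) / 2) * pw k (x 0) (x 1)) - lam * (x 4)/2 * ((a * (x 0) ^ 2 + c * (x 0) + ga) * (2*((a*(x 1)^2 + b*(x 1) + al)*a - (2*a*(x 1) + b)^2/4)*(x 0) + ((a*(x 1)^2 + b*(x 1) + al)*c + (2*a*(x 1) + b)*(be - c*(x 1))/2)) - ((-2 * a * (x 0) * (x 1) - b * (x 0) - c * (x 1) + be) / 2) * (2*(a*(a*(x 0)^2 + c*(x 0) + ga) - (2*a*(x 0) + c)^2/4)*(x 1) + (b*(a*(x 0)^2 + c*(x 0) + ga) + (2*a*(x 0) + c)*(be - b*(x 0))/2))))) * hinv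
  · simp only [Matrix.mulVec, dotProduct, Fin.sum_univ_five, PiA,
      Matrix.cons_val', Matrix.cons_val_zero, Matrix.cons_val_one, Matrix.head_cons,
      Matrix.empty_val', Matrix.cons_val_fin_one, Matrix.head_fin_const,
      Matrix.cons_val_two, Matrix.tail_cons, Matrix.cons_val_three, Matrix.cons_val_four,
      Matrix.of_apply, Fin.zero_eta, Fin.mk_one, Fin.reduceFinMk, hprA22, hpwA11, hprD, hpwD, h0, h1, h2, h3, h4, Pi.zero_apply]
    have hD0 := hdet (x 0) (x 1)
    generalize hDv : (a * x 1 ^ 2 + b * x 1 + al) * (a * x 0 ^ 2 + c * x 0 + ga) -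
      ((-2 * a * x 0 * x 1 - b * x 0 - c * x 1 + be) / 2) ^ 2 = Dv at hD0 ⊢
    have hinv : Dv * Dv⁻¹ = 1 := mul_inv_cancel₀ hD0
    linear_combination (lam * (-(1/2) * (-((-2 * a * (x 0) * (x 1) - b * (x 0) - c * (x 1) + be) / 2) * pr k (x 0) (x 1) + (a * (x 1) ^ 2 + b * (x 1) + al) * pw k (x 0) (x 1)) - lam * (x 4)/2 * (-((-2 * a * (x 0) * (x 1) - b * (x 0) - c * (x 1) + be) / 2) * (2*((a*(x 1)^2 + b*(x 1) + al)*a - (2*a*(x 1) + b)^2/4)*(x 0) + ((a*(x 1)^2 + b*(x 1) + al)*c + (2*a*(x 1) + b)*(be - c*(x 1))/2)) + (a * (x 1) ^ 2 + b * (x 1) + al) * (2*(a*(a*(x 0)^2 + c*(x 0) + ga) - (2*a*(x 0) + c)^2/4)*(x 1) + (b*(a*(x 0)^2 + c*(x 0) + ga) + (2*a*(x 0) + c)*(be - b*(x 0))/2))))) * hinv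
  · simp only [Matrix.mulVec, dotProduct, Fin.sum_univ_five, PiA,
      Matrix.cons_val', Matrix.cons_val_zero, Matrix.cons_val_one, Matrix.head_cons,
      Matrix.empty_val', Matrix.cons_val_fin_one, Matrix.head_fin_const,
      Matrix.cons_val_two, Matrix.tail_cons, Matrix.cons_val_three, Matrix.cons_val_four,
      Matrix.of_apply, Fin.zero_eta, Fin.mk_one, Fin.reduceFinMk, hprA22, hpwA11, hprD, hpwD, h0, h1, h2, h3, h4, Pi.zero_apply]
    have hD0 := hdet (x 0) (x 1)
    generalize hDv : (a * x 1 ^ 2 + b * x 1 + al) * (a * x 0 ^ 2 + c * x 0 + ga) -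
      ((-2 * a * x 0 * x 1 - b * x 0 - c * x 1 + be) / 2) ^ 2 = Dv at hD0 ⊢
    have hinv : Dv * Dv⁻¹ = 1 := mul_inv_cancel₀ hD0
    linear_combination (((x 2) * pr k (x 0) (x 1) + (x 3) * pw k (x 0) (x 1) + lam * (x 4) * ((x 2) * (2*((a*(x 1)^2 + b*(x 1) + al)*a - (2*a*(x 1) + b)^2/4)*(x 0) + ((a*(x 1)^2 + b*(x 1) + al)*c + (2*a*(x 1) + b)*(be - c*(x 1))/2)) + (x 3) * (2*(a*(a*(x 0)^2 + c*(x 0) + ga) - (2*a*(x 0) + c)^2/4)*(x 1) + (b*(a*(x 0)^2 + c*(x 0) + ga) + (2*a*(x 0) + c)*(be - b*(x 0))/2)))) * Dv⁻¹) * hDv + ((x 2) * pr k (x 0) (x 1) + (x 3) * pw k (x 0) (x 1) + lam * (x 4) * ((x 2) * (2*((a*(x 1)^2 + b*(x 1) + al)*a - (2*a*(x 1) + b)^2/4)*(x 0) + ((a*(x 1)^2 + b*(x 1) + al)*c + (2*a*(x 1) + b)*(be - c*(x 1))/2)) + (x 3) * (2*(a*(a*(x 0)^2 + c*(x 0) +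 ga) - (2*a*(x 0) + c)^2/4)*(x 1) + (b*(a*(x 0)^2 + c*(x 0) + ga) + (2*a*(x 0) + c)*(be - b*(x 0))/2)))) * hinv
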